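/- For fixed T > 0 and k ∈ ℝ, the function Δ ↦ K_T^Δ(k)/Δ², where K_T^Δ(k) = √(k² + Δ²)/tanh(√(k² + Δ²)/(2T)), is decreasing in Δ on (0, ∞). -/

import Mathlib

/-!
Since `E² = k² + Δ²`, we have `K_T^Δ(k) / Δ² = (1 + k² / Δ²) / (E tanh (E / 2T))`. The numerator
decreases in `Δ`, while `E ↦ E tanh (E / 2T)` is positive and increasing for `E > 0` and `E`
increases with `Δ`.
-/

/-- `K_T^Δ(k) = √(k² + Δ²)/tanh(√(k² + Δ²)/(2T))`. -/
noncomputable def KTDelta (T k Δ : ℝ) : ℝ :=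
  Real.sqrt (k ^ 2 + Δ ^ 2) / Real.tanh (Real.sqrt (k ^ 2 + Δ ^ 2) / (2 * T))

namespace Real

variable {x y : ℝ}

theorem tanh_le_tanh_iff : tanh x ≤ tanh y ↔ x ≤ y := by
  rw [← artanh_le_artanh_iff ⟨neg_one_lt_tanh x, tanh_lt_one x⟩
    ⟨neg_one_lt_tanh y, tanh_lt_one y⟩, artanh_tanh, artanh_tanh]

theorem tanh_lt_tanh_iff : tanh x < tanh y ↔ x < y :=
  lt_iff_lt_of_le_iff_le tanh_le_tanh_iff

theorem tanh_nonneg_iff : 0 ≤ tanh x ↔ 0 ≤ x := by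
  simpa using tanh_le_tanh_iff (x := 0) (y := x)

theorem tanh_pos_iff : 0 < tanh x ↔ 0 < x := by
  simpa using tanh_lt_tanh_iff (x := 0) (y := x)

theorem mul_tanh_div_le_mul_tanh_div {c : ℝ} (hc : 0 ≤ c) (hx : 0 ≤ x) (hxy : x ≤ y) :
    x * tanh (x / c) ≤ y * tanh (y / c) :=
  mul_le_mul hxy (tanh_le_tanh_iff.2 (by gcongr)) (tanh_nonneg_iff.2 (div_nonneg hx hc))
    (hx.trans hxy)

end Real

theorem KTDelta_div_sq (T k : ℝ) {Δ : ℝ} (hΔ : Δ ≠ 0) :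
    KTDelta T k Δ / Δ ^ 2 =
      (1 + k ^ 2 / Δ ^ 2) / (√(k ^ 2 + Δ ^ 2) * Real.tanh (√(k ^ 2 + Δ ^ 2) / (2 * T))) := by
  rw [KTDelta, one_add_div (pow_ne_zero 2 hΔ), add_comm (Δ ^ 2)]
  set E := √(k ^ 2 + Δ ^ 2)
  have hE : E ^ 2 = k ^ 2 + Δ ^ 2 := Real.sq_sqrt (by positivity)
  rw [← hE]
  have hE0 : E ≠ 0 := by positivity
  field_simp

/-- For fixed `T > 0` and `k ∈ ℝ`, the function `Δ ↦ K_T^Δ(k)/Δ²` is decreasing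
in `Δ` on `(0, ∞)`. -/
theorem KOverDeltaSq_antitone (T k : ℝ) (hT : 0 < T) :
    AntitoneOn (fun Δ : ℝ => KTDelta T k Δ / Δ ^ 2) (Set.Ioi (0 : ℝ)) := by
  intro a (ha : 0 < a) b (hb : 0 < b) hab
  simp only [KTDelta_div_sq T k ha.ne', KTDelta_div_sq T k hb.ne']
  have hEa : 0 < √(k ^ 2 + a ^ 2) := by positivity
  have hE : √(k ^ 2 + a ^ 2) ≤ √(k ^ 2 + b ^ 2) := by gcongr
  refine div_le_div₀ (by positivity) (by gcongr) ?_
    (Real.mul_tanh_div_le_mul_tanh_div (by positivity) hEa.le hE)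
  exact mul_pos hEa (Real.tanh_pos_iff.2 (by positivity))
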